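/- arXiv:math/0610330 — 4 statements merged into one kernel-verified Lean document; each statement's English description precedes it below -/
import Mathlib

section
/- Let E ⊂ ℂ^N be compact, w ≥ 0 on E, μ a finite positive Borel measure on E, and ν the associated measure on Z ⊂ ℂ^(N+1). Suppose (E, w, μ) satisfies the weighted Bernstein–Markov inequality: for every ε > 0 there is C > 0 such that ‖w^d p‖_E ≤ C(1+ε)^d ‖w^d p‖_{L²(μ)} for all polynomials p of degree ≤ d. Then (Z̄, ν) satisfies the Bernstein–Markov inequality: for every ε > 0 there is C' > 0 such that ‖P‖_{Z̄} ≤ C'(1+ε)^{deg P} ‖P‖_{L²(ν)} for all polynomials P on ℂ^(N+1). -/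
/-!
Split `P = ∑ₖ Pₖ` into homogeneous components and let `Gₖ` be `Pₖ` with the extra variable set
to `1`, so that `P(t, λt) = ∑ₖ tᵏ Gₖ(λ)` for `k ≤ d = deg P`. On `Z` this gives
`|P| ≤ ∑ₖ w(λ)ᵏ |Gₖ(λ)|`, and the weighted Bernstein–Markov inequality (with `ε / 2`) bounds
each term by `C (1 + ε/2)ᵏ ‖wᵏ Gₖ‖_{L²(μ)}`. Along the circle `t = w(λ) e^{iθ}` the summands
`tᵏ Gₖ(λ)` are orthogonal Fourier modes, so Parseval gives
`∫ |P|² dν = ∑ₖ ‖wᵏ Gₖ‖²_{L²(μ)}`, in particular `‖wᵏ Gₖ‖_{L²(μ)} ≤ ‖P‖_{L²(ν)}`. Finally the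
loss `(d + 1)(1 + ε/2)ᵈ` is at most `2(1 + ε)/ε · (1 + ε)ᵈ`, and the bound passes to `Z̄` by
continuity.
-/
open MeasureTheory

/-- The measure `ν = dm_λ ⊗ dμ` on `ℂ^{N+1}`. -/
noncomputable def nuMeasure {N : ℕ} (μ : Measure (Fin N → ℂ)) (w : (Fin N → ℂ) → ℝ) :
    Measure (ℂ × (Fin N → ℂ)) :=
  μ.bind (fun l => Measure.map
    (fun θ : ℝ => ((w l * Complex.exp (θ * Complex.I),
        fun i => l i * (w l * Complex.exp (θ * Complex.I))) : ℂ × (Fin N → ℂ)))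
    ((ENNReal.ofReal (2 * Real.pi))⁻¹ • (volume.restrict (Set.Ioc 0 (2 * Real.pi)))))

open Complex Finset
open scoped Real ComplexConjugate

def Prod.optionElim {R σ : Type*} (x : R × (σ → R)) : Option σ → R :=
  fun i => Option.elim i x.1 x.2

theorem continuous_optionElim {R σ : Type*} [TopologicalSpace R] :
    Continuous fun x : R × (σ → R) => x.optionElim :=
  continuous_pi fun i => by cases i <;> simp only [Prod.optionElim, Option.elim] <;> fun_prop

namespace MvPolynomial

variable {R σ τ : Type*} [CommSemiring R]

theorem IsHomogeneous.eval_smul {p : MvPolynomial σ R} {n : ℕ} (hp : p.IsHomogeneous n)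
    (c : R) (x : σ → R) : eval (c • x) p = c ^ n * eval x p := by
  rw [eval_eq, eval_eq, mul_sum]
  refine sum_congr rfl fun m hm => ?_
  have hdeg : ∑ i ∈ m.support, m i = n := by
    simpa [Finsupp.weight_apply, Finsupp.sum] using hp (mem_support_iff.mp hm)
  simp only [Pi.smul_apply, smul_eq_mul, mul_pow, prod_mul_distrib, prod_pow_eq_pow_sum, hdeg]
  ring

theorem totalDegree_X_le_one (i : σ) : (X i : MvPolynomial σ R).totalDegree ≤ 1 :=
  (totalDegree_monomial_le _ _).trans (by simp)

theorem totalDegree_bind₁_le {g : σ → MvPolynomial τ R} (hg : ∀ i, (g i).totalDegree ≤ 1)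
    (p : MvPolynomial σ R) : (bind₁ g p).totalDegree ≤ p.totalDegree := by
  conv_lhs => rw [p.as_sum, map_sum]
  refine (totalDegree_finsetSum _ _).trans (Finset.sup_le fun m hm => ?_)
  rw [bind₁_monomial]
  refine (totalDegree_mul _ _).trans ?_
  rw [totalDegree_C, zero_add]
  refine (totalDegree_finsetProd _ _).trans
    ((sum_le_sum fun i _ => ?_).trans (le_totalDegree hm))
  exact (totalDegree_pow _ _).trans (by simpa using Nat.mul_le_mul_left (m i) (hg i))

noncomputable def dehomogenize : MvPolynomial (Option σ) R →ₐ[R] MvPolynomial σ R :=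
  bind₁ fun o => o.elim 1 X

theorem totalDegree_dehomogenize_le (p : MvPolynomial (Option σ) R) :
    (dehomogenize p).totalDegree ≤ p.totalDegree :=
  totalDegree_bind₁_le (fun o => by cases o <;> simp [totalDegree_X_le_one]) p

theorem eval_dehomogenize (x : σ → R) (p : MvPolynomial (Option σ) R) :
    eval x (dehomogenize p) = eval (fun o => o.elim 1 x) p := by
  induction p using MvPolynomial.induction_on with
  | C a => simp [dehomogenize]
  | add p q hp hq => simp only [map_add, hp, hq]
  | mul_X p i hp =>
    rw [map_mul, map_mul, hp, map_mul]
    cases i <;> simp [dehomogenize]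

noncomputable def dehomogenizedComponent (k : ℕ) (P : MvPolynomial (Option σ) R) :
    MvPolynomial σ R :=
  dehomogenize (homogeneousComponent k P)

theorem totalDegree_dehomogenizedComponent_le (k : ℕ) (P : MvPolynomial (Option σ) R) :
    (dehomogenizedComponent k P).totalDegree ≤ k :=
  (totalDegree_dehomogenize_le _).trans (homogeneousComponent_isHomogeneous k P).totalDegree_le

theorem eval_optionElim_mul_eq_sum (P : MvPolynomial (Option σ) R) (t : R) (x : σ → R) :
    eval (Prod.optionElim (t, fun i => x i * t)) P =
      ∑ k ∈ range (P.totalDegree + 1), t ^ k * eval x (dehomogenizedComponent k P) := by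
  have hpt : Prod.optionElim (t, fun i => x i * t) = t • fun o => o.elim 1 x := by
    funext o; cases o <;> simp [Prod.optionElim, mul_comm]
  conv_lhs => rw [← sum_homogeneousComponent P, map_sum]
  refine sum_congr rfl fun k _ => ?_
  rw [hpt, (homogeneousComponent_isHomogeneous k P).eval_smul, dehomogenizedComponent,
    eval_dehomogenize]

end MvPolynomial

noncomputable def circleMeasure : Measure ℝ :=
  (ENNReal.ofReal (2 * π))⁻¹ • volume.restrict (Set.Ioc 0 (2 * π))

instance : IsProbabilityMeasure circleMeasure := by
  constructor
  rw [circleMeasure, Measure.smul_apply, Measure.restrict_apply_univ, Real.volume_Ioc, sub_zero,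
    smul_eq_mul, ENNReal.inv_mul_cancel (by simp [Real.pi_pos]) ENNReal.ofReal_ne_top]

theorem integral_circleMeasure (f : ℝ → ℂ) :
    ∫ θ, f θ ∂circleMeasure = (2 * π)⁻¹ * ∫ θ in 0..2 * π, f θ := by
  rw [circleMeasure, integral_smul_measure, intervalIntegral.integral_of_le (by positivity),
    ENNReal.toReal_inv, ENNReal.toReal_ofReal (by positivity), Complex.real_smul]

theorem Continuous.integrable_circleMeasure {E : Type*} [NormedAddCommGroup E] {f : ℝ → E}
    (hf : Continuous f) : Integrable f circleMeasure :=
  hf.integrableOn_Ioc.smul_measure (by simp [Real.pi_pos])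

theorem integral_exp_pow_mul_conj (k j : ℕ) :
    ∫ θ, exp (θ * I) ^ k * conj (exp (θ * I) ^ j) ∂circleMeasure = if k = j then 1 else 0 := by
  have hexp : ∀ θ : ℝ, exp (θ * I) ^ k * conj (exp (θ * I) ^ j) = exp (((k : ℂ) - j) * I * θ) := by
    intro θ
    rw [map_pow, ← exp_conj, ← exp_nat_mul, ← exp_nat_mul, ← exp_add]
    congr 1
    simp only [map_mul, conj_ofReal, conj_I]
    ring
  simp_rw [hexp]
  split_ifs with hkj
  · simp [hkj]
  · have hne : ((k : ℂ) - j) * I ≠ 0 := by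
      simpa [sub_eq_zero, I_ne_zero] using hkj
    rw [integral_circleMeasure, integral_exp_mul_complex hne]
    have : exp (((k : ℂ) - j) * I * (2 * π)) = 1 := by
      rw [← exp_int_mul_two_pi_mul_I ((k : ℤ) - j)]
      push_cast; ring_nf
    simp [this]

theorem integral_norm_sum_mul_exp_pow_sq (s : Finset ℕ) (c : ℕ → ℂ) :
    ∫ θ, ‖∑ k ∈ s, c k * exp (θ * I) ^ k‖ ^ 2 ∂circleMeasure = ∑ k ∈ s, ‖c k‖ ^ 2 := by
  have hint : ∀ k j : ℕ, Integrable (fun θ : ℝ =>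
      c k * conj (c j) * (exp (θ * I) ^ k * conj (exp (θ * I) ^ j))) circleMeasure :=
    fun k j => Continuous.integrable_circleMeasure (by fun_prop)
  apply Complex.ofReal_injective
  calc ((∫ θ, ‖∑ k ∈ s, c k * exp (θ * I) ^ k‖ ^ 2 ∂circleMeasure : ℝ) : ℂ)
      = ∫ θ, ∑ k ∈ s, ∑ j ∈ s, c k * conj (c j) * (exp (θ * I) ^ k * conj (exp (θ * I) ^ j))
          ∂circleMeasure := by
        rw [← integral_complex_ofReal]
        congr 1; funext θ
        push_cast
        rw [← mul_conj', map_sum, sum_mul_sum]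
        refine sum_congr rfl fun k _ => sum_congr rfl fun j _ => ?_
        rw [map_mul]; ring
    _ = ∑ k ∈ s, ∑ j ∈ s, c k * conj (c j) * if k = j then 1 else 0 := by
        rw [integral_finsetSum _ fun k _ => integrable_finsetSum _ fun j _ => hint k j]
        refine sum_congr rfl fun k _ => ?_
        rw [integral_finsetSum _ fun j _ => hint k j]
        simp_rw [integral_const_mul, integral_exp_pow_mul_conj]
    _ = ((∑ k ∈ s, ‖c k‖ ^ 2 : ℝ) : ℂ) := by
        simp [mul_conj']

theorem add_one_mul_pow_mul_sub_le {R : Type*} [CommRing R] [LinearOrder R] [IsStrictOrderedRing R]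
    {a b : R} (ha : 0 ≤ a) (hab : a ≤ b) (n : ℕ) :
    (n + 1) * a ^ n * (b - a) ≤ b ^ (n + 1) - a ^ (n + 1) := by
  induction n with
  | zero => simp
  | succ n ih =>
    have hpow : a ^ (n + 1) ≤ b ^ (n + 1) := pow_le_pow_left₀ ha hab _
    rw [pow_succ a (n + 1), pow_succ b (n + 1)]
    rw [pow_succ a n] at ih hpow ⊢
    push_cast
    linear_combination mul_le_mul_of_nonneg_left ih ha +
      mul_le_mul_of_nonneg_right hpow (sub_nonneg.2 hab)

theorem add_one_mul_pow_le {K : Type*} [Field K] [LinearOrder K] [IsStrictOrderedRing K]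
    {a b : K} (ha : 0 ≤ a) (hab : a < b) (n : ℕ) :
    (n + 1) * a ^ n ≤ b / (b - a) * b ^ n := by
  rw [div_mul_eq_mul_div, le_div_iff₀ (sub_pos.2 hab), ← pow_succ']
  exact (add_one_mul_pow_mul_sub_le ha hab.le n).trans (sub_le_self _ (by positivity))

section CircleLift

variable {σ : Type*}

noncomputable def circleLift (w : (σ → ℂ) → ℝ) (p : (σ → ℂ) × ℝ) : ℂ × (σ → ℂ) :=
  (w p.1 * exp (p.2 * I), fun i => p.1 i * (w p.1 * exp (p.2 * I)))

def circledSet (E : Set (σ → ℂ)) (w : (σ → ℂ) → ℝ) : Set (ℂ × (σ → ℂ)) :=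
  {p | ∃ l ∈ E, ∃ t : ℂ, p = (t, fun i => l i * t) ∧ ‖t‖ = w l}

theorem measurable_circleLift {w : (σ → ℂ) → ℝ} (hw : Measurable w) :
    Measurable (circleLift w) := by
  unfold circleLift; fun_prop

theorem circleLift_mem_circledSet {E : Set (σ → ℂ)} {w : (σ → ℂ) → ℝ} {l : σ → ℂ} (hl : l ∈ E)
    (hw : 0 ≤ w l) (θ : ℝ) : circleLift w (l, θ) ∈ circledSet E w :=
  ⟨l, hl, _, rfl, by simp [norm_exp_ofReal_mul_I, abs_of_nonneg hw]⟩

theorem isBounded_circledSet [Fintype σ] {E : Set (σ → ℂ)} {w : (σ → ℂ) → ℝ} (hE : IsCompact E)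
    (hw : BddAbove (w '' E)) : Bornology.IsBounded (circledSet E w) := by
  obtain ⟨W, hW⟩ := hw
  refine ((hE.prod (isCompact_closedBall (0 : ℂ) W)).image
    (f := fun q : (σ → ℂ) × ℂ => (q.2, fun i => q.1 i * q.2)) (by fun_prop)).isBounded.subset ?_
  rintro _ ⟨l, hl, t, rfl, ht⟩
  exact ⟨(l, t), ⟨hl, by simpa [ht] using hW ⟨l, hl, rfl⟩⟩, rfl⟩

end CircleLift

theorem nuMeasure_eq_map_prod {N : ℕ} {w : (Fin N → ℂ) → ℝ} (hw : Measurable w)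
    (μ : Measure (Fin N → ℂ)) : nuMeasure μ w = (μ.prod circleMeasure).map (circleLift w) := by
  have hlift := measurable_circleLift hw
  have hfiber : ∀ l, (circleMeasure.map fun θ => circleLift w (l, θ)) =
      (circleMeasure.map (Prod.mk l)).map (circleLift w) := fun l =>
    (Measure.map_map hlift measurable_prodMk_left).symm
  ext s hs
  rw [Measure.map_apply hlift hs, Measure.prod_apply (hlift hs), nuMeasure,
    Measure.bind_apply hs ?_]
  · exact lintegral_congr fun l => Measure.map_apply (hlift.comp measurable_prodMk_left) hs
  · change AEMeasurable (fun l => circleMeasure.map fun θ => circleLift w (l, θ)) μ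
    simp_rw [hfiber]
    exact ((Measure.measurable_map _ hlift).comp Measurable.map_prodMk_left).aemeasurable

theorem IsCompact.bddAbove_pow_mul_norm_image {X F : Type*} [TopologicalSpace X]
    [SeminormedAddCommGroup F] {E : Set X} {w : X → ℝ} {f : X → F} (hE : IsCompact E)
    (hw : BddAbove (w '' E)) (hw0 : ∀ x ∈ E, 0 ≤ w x) (hf : ContinuousOn f E) (k : ℕ) :
    BddAbove ((fun x => w x ^ k * ‖f x‖) '' E) := by
  obtain ⟨W, hW⟩ := hw
  obtain ⟨M, hM⟩ := hE.bddAbove_image (continuous_norm.comp_continuousOn hf)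
  refine ⟨W ^ k * M, ?_⟩
  rintro _ ⟨x, hx, rfl⟩
  have hwx : w x ≤ W := hW ⟨x, hx, rfl⟩
  exact mul_le_mul (pow_le_pow_left₀ (hw0 x hx) hwx k) (hM ⟨x, hx, rfl⟩) (norm_nonneg _)
    (pow_nonneg ((hw0 x hx).trans hwx) k)

section Transfer

open MvPolynomial

variable {N : ℕ} {E : Set (Fin N → ℂ)} {w : (Fin N → ℂ) → ℝ} {μ : Measure (Fin N → ℂ)}
  (P : MvPolynomial (Option (Fin N)) ℂ)

theorem continuous_norm_eval_optionElim :
    Continuous fun x : ℂ × (Fin N → ℂ) => ‖eval x.optionElim P‖ :=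
  (continuous_eval P).comp continuous_optionElim |>.norm

theorem integral_norm_eval_circleLift_sq (l : Fin N → ℂ) :
    ∫ θ, ‖eval (circleLift w (l, θ)).optionElim P‖ ^ 2 ∂circleMeasure =
      ∑ k ∈ range (P.totalDegree + 1),
        (w l ^ k * ‖eval l (dehomogenizedComponent k P)‖) ^ 2 := by
  have hsum : ∀ θ : ℝ, eval (circleLift w (l, θ)).optionElim P =
      ∑ k ∈ range (P.totalDegree + 1),
        ((w l : ℂ) ^ k * eval l (dehomogenizedComponent k P)) * exp (θ * I) ^ k := by
    intro θ
    rw [circleLift, eval_optionElim_mul_eq_sum]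
    exact sum_congr rfl fun k _ => by ring
  simp_rw [hsum, integral_norm_sum_mul_exp_pow_sq]
  refine sum_congr rfl fun k _ => ?_
  rw [norm_mul, norm_pow, norm_real, Real.norm_eq_abs, pow_abs, mul_pow, sq_abs, mul_pow]

theorem integrable_norm_eval_circleLift_sq [IsFiniteMeasure μ] (hE : IsCompact E)
    (hw : BddAbove (w '' E)) (hwm : Measurable w) (hw0 : ∀ l ∈ E, 0 ≤ w l) (hμE : μ Eᶜ = 0) :
    Integrable (fun p => ‖eval (circleLift w p).optionElim P‖ ^ 2) (μ.prod circleMeasure) := by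
  have hcont := (continuous_norm_eval_optionElim P).pow 2
  obtain ⟨M, hM⟩ := ((isBounded_circledSet hE hw).isCompact_closure.image hcont).bddAbove
  have hE' : ∀ᵐ p ∂(μ.prod circleMeasure), p.1 ∈ E :=
    Measure.quasiMeasurePreserving_fst.ae (mem_ae_iff.2 hμE)
  refine .of_bound (hcont.measurable.comp (measurable_circleLift hwm)).aestronglyMeasurable M ?_
  filter_upwards [hE'] with p hp
  rw [Real.norm_of_nonneg (by positivity)]
  exact hM ⟨_, subset_closure (circleLift_mem_circledSet hp (hw0 _ hp) p.2), rfl⟩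

theorem integral_sq_le_integral_nuMeasure [IsFiniteMeasure μ] (hE : IsCompact E)
    (hw : BddAbove (w '' E)) (hwm : Measurable w) (hw0 : ∀ l ∈ E, 0 ≤ w l) (hμE : μ Eᶜ = 0)
    {k : ℕ} (hk : k ≤ P.totalDegree) :
    ∫ l, (w l ^ k * ‖eval l (dehomogenizedComponent k P)‖) ^ 2 ∂μ ≤
      ∫ x, ‖eval x.optionElim P‖ ^ 2 ∂nuMeasure μ w := by
  have hint := integrable_norm_eval_circleLift_sq P hE hw hwm hw0 hμE
  have hcont : Continuous fun x : ℂ × (Fin N → ℂ) => ‖eval x.optionElim P‖ ^ 2 :=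
    (continuous_norm_eval_optionElim P).pow 2
  rw [nuMeasure_eq_map_prod hwm, integral_map (measurable_circleLift hwm).aemeasurable
    hcont.aestronglyMeasurable, integral_prod _ hint]
  refine integral_mono_of_nonneg (ae_of_all _ fun l => sq_nonneg _) hint.integral_prod_left
    (ae_of_all _ fun l => ?_)
  simp only [integral_norm_eval_circleLift_sq]
  exact single_le_sum (fun j _ => sq_nonneg (w l ^ j * ‖eval l (dehomogenizedComponent j P)‖))
    (mem_range.2 (Nat.lt_succ_of_le hk))

theorem norm_eval_le_of_mem_closure_circledSet {B : ℝ}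
    (hB : ∀ k ≤ P.totalDegree, ∀ l ∈ E,
      w l ^ k * ‖eval l (dehomogenizedComponent k P)‖ ≤ B)
    {z : ℂ × (Fin N → ℂ)} (hz : z ∈ closure (circledSet E w)) :
    ‖eval z.optionElim P‖ ≤ (P.totalDegree + 1) * B := by
  refine closure_minimal (fun z hz => ?_)
    (isClosed_le (continuous_norm_eval_optionElim P) continuous_const) hz
  obtain ⟨l, hl, t, rfl, ht⟩ := hz
  change ‖_‖ ≤ _
  rw [eval_optionElim_mul_eq_sum]
  calc _ ≤ ∑ k ∈ range (P.totalDegree + 1),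
        ‖t ^ k * eval l (dehomogenizedComponent k P)‖ := norm_sum_le _ _
    _ ≤ ∑ _k ∈ range (P.totalDegree + 1), B := sum_le_sum fun k hk => by
        rw [norm_mul, norm_pow, ht]
        exact hB k (Nat.lt_succ_iff.1 (mem_range.1 hk)) l hl
    _ = _ := by simp

end Transfer

/-- If `(E, w, μ)` satisfies the weighted Bernstein–Markov inequality, then `(Z̄, ν)`
satisfies the Bernstein–Markov inequality, where `Z = {(t,λt) : λ ∈ E, |t| = w(λ)}`
and `ν = dm_λ ⊗ dμ`. -/
theorem weighted_BM_implies_BM {N : ℕ} (E : Set (Fin N → ℂ)) (hE : IsCompact E)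
    (w : (Fin N → ℂ) → ℝ) (hw_usc : UpperSemicontinuousOn w E)
    (hwm : Measurable w) (hw0 : ∀ l ∈ E, 0 ≤ w l)
    (μ : Measure (Fin N → ℂ)) [IsFiniteMeasure μ] (hμE : μ Eᶜ = 0)
    (Z : Set (ℂ × (Fin N → ℂ)))
    (hZ : Z = {p | ∃ l ∈ E, ∃ t : ℂ,
      p = (t, fun i => l i * t) ∧ ‖t‖ = w l})
    (hBM : ∀ ε > (0:ℝ), ∃ C > (0:ℝ), ∀ d : ℕ, ∀ p : MvPolynomial (Fin N) ℂ,
      p.totalDegree ≤ d →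
      sSup ((fun l => w l ^ d * ‖MvPolynomial.eval l p‖) '' E)
        ≤ C * (1 + ε) ^ d *
          Real.sqrt (∫ l, (w l ^ d * ‖MvPolynomial.eval l p‖) ^ 2 ∂μ)) :
    ∀ ε > (0:ℝ), ∃ C > (0:ℝ), ∀ P : MvPolynomial (Option (Fin N)) ℂ,
      sSup ((fun x : ℂ × (Fin N → ℂ) =>
          ‖MvPolynomial.eval (fun i => Option.elim i x.1 x.2) P‖) '' closure Z)
        ≤ C * (1 + ε) ^ P.totalDegree *
          Real.sqrt (∫ x : ℂ × (Fin N → ℂ),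
            ‖MvPolynomial.eval (fun i => Option.elim i x.1 x.2) P‖ ^ 2
            ∂(nuMeasure μ w)) := by
  intro ε hε
  obtain ⟨C, hC, hBM⟩ := hBM (ε / 2) (by positivity)
  refine ⟨C * ((1 + ε) / (ε / 2)), by positivity, fun P => ?_⟩
  obtain rfl : Z = circledSet E w := hZ
  have hwE := hw_usc.bddAbove_of_isCompact hE
  set d := P.totalDegree
  set I := ∫ x : ℂ × (Fin N → ℂ), ‖MvPolynomial.eval (fun i => Option.elim i x.1 x.2) P‖ ^ 2
    ∂nuMeasure μ w
  have hcomponent : ∀ k ≤ d, ∀ l ∈ E,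
      w l ^ k * ‖MvPolynomial.eval l (MvPolynomial.dehomogenizedComponent k P)‖ ≤
        C * (1 + ε / 2) ^ d * √I := by
    intro k hk l hl
    refine (le_csSup (hE.bddAbove_pow_mul_norm_image hwE hw0
      (MvPolynomial.continuous_eval _).continuousOn k) ⟨l, hl, rfl⟩).trans <|
      (hBM k _ (MvPolynomial.totalDegree_dehomogenizedComponent_le k P)).trans ?_
    gcongr
    · linarith
    · exact integral_sq_le_integral_nuMeasure P hE hwE hwm hw0 hμE hk
  have hgrowth : (d + 1) * (1 + ε / 2) ^ d ≤ (1 + ε) / (ε / 2) * (1 + ε) ^ d := by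
    have h := add_one_mul_pow_le (a := 1 + ε / 2) (b := 1 + ε) (by positivity) (by linarith) d
    rwa [show 1 + ε - (1 + ε / 2) = ε / 2 by ring] at h
  refine Real.sSup_le (Set.forall_mem_image.2 fun z hz =>
    (norm_eval_le_of_mem_closure_circledSet P hcomponent hz).trans ?_) (by positivity)
  calc (d + 1) * (C * (1 + ε / 2) ^ d * √I) = C * √I * ((d + 1) * (1 + ε / 2) ^ d) := by ring
    _ ≤ C * √I * ((1 + ε) / (ε / 2) * (1 + ε) ^ d) := by gcongr
    _ = _ := by ring
end

section
/- Conversely, if (Z̄, ν) satisfies the Bernstein–Markov inequality for homogeneous polynomials, then (E, w, μ) satisfies the weighted Bernstein–Markov inequality: for every ε > 0 there is C > 0 such that for every integer d ≥ 0 and every polynomial p of degree ≤ d, ‖w^d p‖_E ≤ C(1+ε)^d ‖w^d p‖_{L²(μ)}. -/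
/-!
Homogenizing `p` to degree `d` gives `P (t, t l) = t ^ d p l`. At the points `(w l, w l • l)`
of `Z` this is `w l ^ d p l`, so the supremum of `w ^ d |p|` over `E` is at most that of `|P|`
over `closure Z`; and `|P|` is constant on each circle `|t| = w l` that `ν` averages over, so
`‖P‖_{L²(ν)} = ‖w ^ d p‖_{L²(μ)}`. The Bernstein–Markov inequality for `P` is thus the weighted
one for `p`.
-/

open MeasureTheory

namespace MvPolynomial

variable {σ R : Type*} [CommSemiring R]

/-- The new variable `none` takes up the missing degree of each monomial. -/
noncomputable def homogenize (d : ℕ) (p : MvPolynomial σ R) : MvPolynomial (Option σ) R :=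
  ∑ m ∈ p.support, monomial (m.mapDomain some + .single none (d - m.degree)) (p.coeff m)

theorem degree_mapDomain_some_add_single {m : σ →₀ ℕ} {d : ℕ} (h : m.degree ≤ d) :
    (m.mapDomain some + .single none (d - m.degree)).degree = d := by
  rw [map_add, Finsupp.degree_mapDomain, Finsupp.degree_single]
  omega

theorem isHomogeneous_homogenize {d : ℕ} {p : MvPolynomial σ R} (h : p.totalDegree ≤ d) :
    (homogenize d p).IsHomogeneous d :=
  IsHomogeneous.sum _ _ _ fun _m hm => isHomogeneous_monomial _
    (degree_mapDomain_some_add_single ((le_totalDegree hm).trans h))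

theorem eval_homogenize {d : ℕ} {p : MvPolynomial σ R} (h : p.totalDegree ≤ d)
    (t : R) (x : σ → R) :
    eval (fun i => Option.elim i t fun j => x j * t) (homogenize d p) = t ^ d * eval x p := by
  set g : Option σ → R := fun i => Option.elim i t fun j => x j * t
  rw [homogenize, map_sum, eval_eq, Finset.mul_sum]
  refine Finset.sum_congr rfl fun m hm => ?_
  have hmd : m.degree ≤ d := (le_totalDegree hm).trans h
  have hsome :
      (m.prod fun j e => g (some j) ^ e) = (m.prod fun j e => x j ^ e) * t ^ m.degree := by
    simp only [g, Option.elim_some, mul_pow, Finsupp.prod, Finset.prod_mul_distrib,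
      Finset.prod_pow_eq_pow_sum, Finsupp.degree_apply]
  rw [eval_monomial, Finsupp.prod_add_index' (fun _ => pow_zero _) (fun _ _ _ => pow_add _ _ _),
    Finsupp.prod_mapDomain_index (fun _ => pow_zero _) (fun _ _ _ => pow_add _ _ _),
    Finsupp.prod_single_index (h := fun i e => g i ^ e) (pow_zero _), hsome, Finsupp.prod]
  have hpow : t ^ m.degree * g none ^ (d - m.degree) = t ^ d := by
    rw [show g none = t from rfl, ← pow_add, Nat.add_sub_cancel' hmd]
  rw [← hpow]
  ring

end MvPolynomial

open Complex

section Cone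

variable {ι : Type*}

def conePoint (l : ι → ℂ) (t : ℂ) : ℂ × (ι → ℂ) := (t, fun i => l i * t)

def weightedCone (E : Set (ι → ℂ)) (w : (ι → ℂ) → ℝ) : Set (ℂ × (ι → ℂ)) :=
  {x | ∃ l ∈ E, ∃ t : ℂ, x = conePoint l t ∧ ‖t‖ = w l}

theorem continuous_conePoint : Continuous fun q : (ι → ℂ) × ℂ => conePoint q.1 q.2 := by
  unfold conePoint; fun_prop

theorem isCompact_closure_weightedCone [Finite ι] {E : Set (ι → ℂ)} (hE : IsCompact E)
    {w : (ι → ℂ) → ℝ} (hw : UpperSemicontinuousOn w E) :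
    IsCompact (closure (weightedCone E w)) := by
  obtain ⟨M, hM⟩ := hw.bddAbove_of_isCompact hE
  refine ((hE.prod (isCompact_closedBall (0 : ℂ) M)).image
    continuous_conePoint).closure_of_subset ?_
  rintro _ ⟨l, hl, t, rfl, ht⟩
  exact ⟨(l, t), ⟨hl, by simpa [ht] using hM ⟨l, hl, rfl⟩⟩, rfl⟩

end Cone

section Measure

variable {N : ℕ} {μ : Measure (Fin N → ℂ)} {w : (Fin N → ℂ) → ℝ}

theorem lintegral_nuMeasure_of_circle_invariant (hw : Measurable w)
    {f : ℂ × (Fin N → ℂ) → ENNReal} (hf : Measurable f)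
    (hinv : ∀ l (θ : ℝ), f (conePoint l (w l * exp (θ * I))) = f (conePoint l (w l))) :
    ∫⁻ x, f x ∂nuMeasure μ w = ∫⁻ l, f (conePoint l (w l)) ∂μ := by
  set m₀ : Measure ℝ :=
    (ENNReal.ofReal (2 * Real.pi))⁻¹ • volume.restrict (Set.Ioc 0 (2 * Real.pi))
  set Φ : (Fin N → ℂ) × ℝ → ℂ × (Fin N → ℂ) := fun q => conePoint q.1 (w q.1 * exp (q.2 * I))
  have hΦ : Measurable Φ :=
    continuous_conePoint.measurable.comp (measurable_fst.prodMk (by fun_prop))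
  have hm₀ : IsProbabilityMeasure m₀ := by
    constructor
    rw [Measure.smul_apply, Measure.restrict_apply_univ, Real.volume_Ioc, sub_zero, smul_eq_mul]
    exact ENNReal.inv_mul_cancel (by positivity) ENNReal.ofReal_ne_top
  have hfibre : ∀ l, Measure.map (fun θ => Φ (l, θ)) m₀ =
      Measure.map Φ (Measure.map (Prod.mk l) m₀) :=
    fun l => (Measure.map_map hΦ measurable_prodMk_left).symm
  have hκ : Measurable fun l => Measure.map (fun θ => Φ (l, θ)) m₀ := by
    simp_rw [hfibre]
    exact (Measure.measurable_map Φ hΦ).comp Measurable.map_prodMk_left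
  refine (Measure.lintegral_bind hκ.aemeasurable hf.aemeasurable).trans
    (lintegral_congr fun l => ?_)
  rw [lintegral_map hf (show Measurable fun θ => Φ (l, θ) from hΦ.comp measurable_prodMk_left)]
  simp only [Φ, hinv, lintegral_const, measure_univ, mul_one]

theorem integral_nuMeasure_of_circle_invariant (hw : Measurable w)
    {f : ℂ × (Fin N → ℂ) → ℝ} (hf : Measurable f) (hf0 : 0 ≤ f)
    (hinv : ∀ l (θ : ℝ), f (conePoint l (w l * exp (θ * I))) = f (conePoint l (w l))) :
    ∫ x, f x ∂nuMeasure μ w = ∫ l, f (conePoint l (w l)) ∂μ := by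
  have hfw : Measurable fun l => f (conePoint l (w l)) :=
    hf.comp <| continuous_conePoint.measurable.comp <|
      measurable_id.prodMk (measurable_ofReal.comp hw)
  rw [integral_eq_lintegral_of_nonneg_ae (.of_forall hf0) hf.aestronglyMeasurable,
    integral_eq_lintegral_of_nonneg_ae (f := fun l => f (conePoint l (w l)))
      (.of_forall fun l => hf0 _) hfw.aestronglyMeasurable,
    lintegral_nuMeasure_of_circle_invariant hw hf.ennreal_ofReal fun l θ => by rw [hinv]]

end Measure

theorem continuous_eval_optionElim {ι : Type*} (P : MvPolynomial (Option ι) ℂ) :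
    Continuous fun x : ℂ × (ι → ℂ) => MvPolynomial.eval (fun i => Option.elim i x.1 x.2) P := by
  refine MvPolynomial.continuous_eval P |>.comp (continuous_pi fun i => ?_)
  cases i with
  | none => exact continuous_fst
  | some j => exact (continuous_apply j).comp continuous_snd

theorem norm_eval_homogenize_conePoint {ι : Type*} {d : ℕ} {p : MvPolynomial ι ℂ}
    (h : p.totalDegree ≤ d) (l : ι → ℂ) (t : ℂ) :
    ‖MvPolynomial.eval (fun i => Option.elim i (conePoint l t).1 (conePoint l t).2)
      (p.homogenize d)‖ = ‖t‖ ^ d * ‖MvPolynomial.eval l p‖ := by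
  rw [conePoint, MvPolynomial.eval_homogenize h, norm_mul, norm_pow]

section HomogenizedNorms

variable {N : ℕ} {d : ℕ} {p : MvPolynomial (Fin N) ℂ}

theorem integral_sq_norm_eval_homogenize {μ : Measure (Fin N → ℂ)} {w : (Fin N → ℂ) → ℝ}
    (hw : Measurable w) (h : p.totalDegree ≤ d) :
    ∫ x, ‖MvPolynomial.eval (fun i => Option.elim i x.1 x.2) (p.homogenize d)‖ ^ 2
      ∂nuMeasure μ w = ∫ l, (w l ^ d * ‖MvPolynomial.eval l p‖) ^ 2 ∂μ := by
  have hnorm := norm_eval_homogenize_conePoint h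
  refine (integral_nuMeasure_of_circle_invariant hw
    (f := fun x => ‖MvPolynomial.eval (fun i => Option.elim i x.1 x.2) (p.homogenize d)‖ ^ 2)
    ((continuous_eval_optionElim _).norm.pow 2).measurable (fun _ => sq_nonneg _)
    fun l θ => by simp only [hnorm, norm_mul, norm_exp_ofReal_mul_I, mul_one]).trans ?_
  congr with l
  rw [hnorm, norm_real, Real.norm_eq_abs, ← abs_pow, mul_pow, sq_abs, mul_pow]

theorem sSup_weighted_le_sSup_closure_weightedCone {E : Set (Fin N → ℂ)} (hE : IsCompact E)
    {w : (Fin N → ℂ) → ℝ} (hw : UpperSemicontinuousOn w E) (hw0 : ∀ l ∈ E, 0 ≤ w l)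
    (h : p.totalDegree ≤ d) :
    sSup ((fun l => w l ^ d * ‖MvPolynomial.eval l p‖) '' E) ≤
      sSup ((fun x : ℂ × (Fin N → ℂ) => ‖MvPolynomial.eval (fun i => Option.elim i x.1 x.2)
        (p.homogenize d)‖) '' closure (weightedCone E w)) := by
  have hbdd := ((isCompact_closure_weightedCone hE hw).image
    (continuous_eval_optionElim (p.homogenize d)).norm).bddAbove
  refine Real.sSup_le (fun _ ⟨l, hl, hval⟩ => le_csSup hbdd ⟨conePoint l (w l),
    subset_closure ⟨l, hl, _, rfl, ?_⟩, ?_⟩)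
    (Real.sSup_nonneg fun _ ⟨_, _, h⟩ => h ▸ norm_nonneg _)
  · rw [norm_real, Real.norm_of_nonneg (hw0 l hl)]
  · rw [← hval]
    dsimp only
    rw [norm_eval_homogenize_conePoint h, norm_real, Real.norm_of_nonneg (hw0 l hl)]

end HomogenizedNorms

theorem BM_implies_weighted_BM_general {N : ℕ} (E : Set (Fin N → ℂ)) (hE : IsCompact E)
    (w : (Fin N → ℂ) → ℝ) (hw_usc : UpperSemicontinuousOn w E)
    (hwm : Measurable w) (hw0 : ∀ l ∈ E, 0 ≤ w l)
    (μ : Measure (Fin N → ℂ))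
    (Z : Set (ℂ × (Fin N → ℂ)))
    (hZ : Z = {p | ∃ l ∈ E, ∃ t : ℂ,
      p = (t, fun i => l i * t) ∧ ‖t‖ = w l})
    (hBM : ∀ ε > (0:ℝ), ∃ C > (0:ℝ), ∀ d : ℕ,
      ∀ P : MvPolynomial (Option (Fin N)) ℂ, P.IsHomogeneous d →
      sSup ((fun x : ℂ × (Fin N → ℂ) =>
          ‖MvPolynomial.eval (fun i => Option.elim i x.1 x.2) P‖) '' closure Z)
        ≤ C * (1 + ε) ^ d *
          Real.sqrt (∫ x : ℂ × (Fin N → ℂ),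
            ‖MvPolynomial.eval (fun i => Option.elim i x.1 x.2) P‖ ^ 2
            ∂(nuMeasure μ w))) :
    ∀ ε > (0:ℝ), ∃ C > (0:ℝ), ∀ d : ℕ, ∀ p : MvPolynomial (Fin N) ℂ,
      p.totalDegree ≤ d →
      sSup ((fun l => w l ^ d * ‖MvPolynomial.eval l p‖) '' E)
        ≤ C * (1 + ε) ^ d *
          Real.sqrt (∫ l, (w l ^ d * ‖MvPolynomial.eval l p‖) ^ 2 ∂μ) := by
  intro ε hε
  obtain ⟨C, hC, hBMC⟩ := hBM ε hε
  refine ⟨C, hC, fun d p hpd => ?_⟩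
  have hZ' : Z = weightedCone E w := hZ
  have key := hBMC d _ (MvPolynomial.isHomogeneous_homogenize hpd)
  rw [hZ', integral_sq_norm_eval_homogenize hwm hpd] at key
  exact (sSup_weighted_le_sSup_closure_weightedCone hE hw_usc hw0 hpd).trans key

/-- Conversely: if `(Z̄, ν)` satisfies the Bernstein–Markov inequality for homogeneous
polynomials, then `(E, w, μ)` satisfies the weighted Bernstein–Markov inequality. -/
theorem BM_implies_weighted_BM {N : ℕ} (E : Set (Fin N → ℂ)) (hE : IsCompact E)
    (w : (Fin N → ℂ) → ℝ) (hw_usc : UpperSemicontinuousOn w E)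
    (hwm : Measurable w) (hw0 : ∀ l ∈ E, 0 ≤ w l)
    (μ : Measure (Fin N → ℂ)) [IsFiniteMeasure μ] (hμE : μ Eᶜ = 0)
    (Z : Set (ℂ × (Fin N → ℂ)))
    (hZ : Z = {p | ∃ l ∈ E, ∃ t : ℂ,
      p = (t, fun i => l i * t) ∧ ‖t‖ = w l})
    (hBM : ∀ ε > (0:ℝ), ∃ C > (0:ℝ), ∀ d : ℕ,
      ∀ P : MvPolynomial (Option (Fin N)) ℂ, P.IsHomogeneous d →
      sSup ((fun x : ℂ × (Fin N → ℂ) =>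
          ‖MvPolynomial.eval (fun i => Option.elim i x.1 x.2) P‖) '' closure Z)
        ≤ C * (1 + ε) ^ d *
          Real.sqrt (∫ x : ℂ × (Fin N → ℂ),
            ‖MvPolynomial.eval (fun i => Option.elim i x.1 x.2) P‖ ^ 2
            ∂(nuMeasure μ w))) :
    ∀ ε > (0:ℝ), ∃ C > (0:ℝ), ∀ d : ℕ, ∀ p : MvPolynomial (Fin N) ℂ,
      p.totalDegree ≤ d →
      sSup ((fun l => w l ^ d * ‖MvPolynomial.eval l p‖) '' E)
        ≤ C * (1 + ε) ^ d *
          Real.sqrt (∫ l, (w l ^ d * ‖MvPolynomial.eval l p‖) ^ 2 ∂μ) :=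
  BM_implies_weighted_BM_general E hE w hw_usc hwm hw0 μ Z hZ hBM
end

section
/- Let E ⊂ ℝ^N be compact, w : E → ℝ continuous with inf_{x ∈ E} w(x) > 0, and let σ be a finite positive Borel measure on E such that (E, σ) satisfies the Bernstein–Markov inequality. Then (E, w, σ) satisfies the weighted Bernstein–Markov inequality: for every ε > 0 there exists C > 0 such that for all d ≥ 0 and all polynomials G of degree ≤ d, ‖w^d G‖_E ≤ C(1+ε)^d ‖w^d G‖_{L²(σ)}. -/
/-!
Approximate `w` on `E` by a polynomial `H` with relative error `δ`, i.e. `|H - w| ≤ δ w`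
(Stone–Weierstrass; `w` is bounded below by a positive constant). For `deg G ≤ d` the
polynomial `J = H ^ d * G` has degree at most `(deg H + 1) d` and is comparable to `w ^ d G`
on `E` up to the factors `(1 ± δ) ^ d`. The unweighted Bernstein–Markov inequality for `J`
with a small enough `ε'` then gives the weighted one, since both `(1 + δ) / (1 - δ)` and
`(1 + ε') ^ (deg H + 1)` can be made smaller than `√(1 + ε)`.
-/

open MeasureTheory MvPolynomial Filter Topology

theorem exists_one_add_div_one_sub_le {η : ℝ} (hη : 1 < η) :
    ∃ δ, 0 < δ ∧ δ < 1 ∧ (1 + δ) / (1 - δ) ≤ η := by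
  refine ⟨(η - 1) / (η + 1), div_pos (by linarith) (by linarith),
    (div_lt_one (by linarith)).mpr (by linarith), le_of_eq ?_⟩
  field_simp
  ring

theorem exists_one_add_pow_lt {η : ℝ} (hη : 1 < η) (n : ℕ) : ∃ ε > 0, (1 + ε) ^ n < η := by
  have hnear : ∀ᶠ t in 𝓝 (0 : ℝ), (1 + t) ^ n < η :=
    (show Continuous fun t : ℝ => (1 + t) ^ n by fun_prop).continuousAt.eventually_lt
      continuousAt_const (by simpa using hη)
  obtain ⟨t, ht, ht0⟩ := ((hnear.filter_mono nhdsWithin_le_nhds).and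
    (self_mem_nhdsWithin (s := Set.Ioi 0))).exists
  exact ⟨t, ht0, ht⟩

namespace MvPolynomial

variable {ι : Type*}

theorem totalDegree_pow_mul_le {R : Type*} [CommSemiring R] (H : MvPolynomial ι R)
    {G : MvPolynomial ι R} {d : ℕ} (hG : G.totalDegree ≤ d) :
    (H ^ d * G).totalDegree ≤ (H.totalDegree + 1) * d :=
  calc (H ^ d * G).totalDegree ≤ d * H.totalDegree + d :=
        (totalDegree_mul _ _).trans (add_le_add (totalDegree_pow _ _) hG)
    _ = (H.totalDegree + 1) * d := by ring

theorem exists_abs_eval_sub_lt_of_continuousOn {E : Set (ι → ℝ)} (hE : IsCompact E)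
    {f : (ι → ℝ) → ℝ} (hf : ContinuousOn f E) {ε : ℝ} (hε : 0 < ε) :
    ∃ p : MvPolynomial ι ℝ, ∀ x ∈ E, |eval x p - f x| < ε := by
  have : CompactSpace E := isCompact_iff_compactSpace.mp hE
  let φ : MvPolynomial ι ℝ →ₐ[ℝ] C(E, ℝ) :=
    aeval fun i => ⟨fun y => (y : ι → ℝ) i, (continuous_apply i).comp continuous_subtype_val⟩
  have hφ (p : MvPolynomial ι ℝ) (x : E) : φ p x = eval (x : ι → ℝ) p := by
    induction p using MvPolynomial.induction_on with
    | C a => simp [φ]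
    | add p q hp hq => simp [hp, hq]
    | mul_X p i hp => simp [φ, hp]
  have hsep : φ.range.SeparatesPoints := by
    intro x y hxy
    obtain ⟨i, hi⟩ := Function.ne_iff.mp (Subtype.coe_injective.ne hxy)
    exact ⟨_, ⟨φ (X i), ⟨X i, rfl⟩, rfl⟩, by simpa [hφ] using hi⟩
  obtain ⟨⟨g, p, rfl⟩, hg⟩ :=
    ContinuousMap.exists_mem_subalgebra_near_continuous_of_separatesPoints φ.range hsep
      (E.domRestrict f) hf.domRestrict ε hε
  exact ⟨p, fun x hx => by simpa [hφ] using hg ⟨x, hx⟩⟩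

theorem exists_abs_eval_sub_le_mul {E : Set (ι → ℝ)} (hE : IsCompact E) {w : (ι → ℝ) → ℝ}
    (hw : ContinuousOn w E) {m : ℝ} (hm : 0 < m) (hmw : ∀ x ∈ E, m ≤ w x) {δ : ℝ} (hδ : 0 < δ) :
    ∃ p : MvPolynomial ι ℝ, ∀ x ∈ E, |eval x p - w x| ≤ δ * w x := by
  obtain ⟨p, hp⟩ := exists_abs_eval_sub_lt_of_continuousOn hE hw (mul_pos hδ hm)
  exact ⟨p, fun x hx => (hp x hx).le.trans (mul_le_mul_of_nonneg_left (hmw x hx) hδ.le)⟩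

end MvPolynomial

theorem sqrt_integral_sq_le_of_ae_abs_le {α : Type*} [MeasurableSpace α] {μ : Measure α}
    {f g : α → ℝ} {c : ℝ} (hc : 0 ≤ c) (hg : Integrable (fun x => g x ^ 2) μ)
    (hfg : ∀ᵐ x ∂μ, |f x| ≤ c * |g x|) :
    √(∫ x, f x ^ 2 ∂μ) ≤ c * √(∫ x, g x ^ 2 ∂μ) := by
  have hsq : ∫ x, f x ^ 2 ∂μ ≤ c ^ 2 * ∫ x, g x ^ 2 ∂μ := by
    rw [← integral_const_mul]
    refine integral_mono_of_nonneg (.of_forall fun x => sq_nonneg _) (hg.const_mul _) ?_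
    filter_upwards [hfg] with x hx
    rw [← sq_abs (f x), ← sq_abs (g x), ← mul_pow]
    exact pow_le_pow_left₀ (abs_nonneg _) hx 2
  calc √(∫ x, f x ^ 2 ∂μ) ≤ √(c ^ 2 * ∫ x, g x ^ 2 ∂μ) := Real.sqrt_le_sqrt hsq
    _ = c * √(∫ x, g x ^ 2 ∂μ) := by rw [Real.sqrt_mul (sq_nonneg c), Real.sqrt_sq hc]

theorem one_sub_pow_mul_le_abs_pow_mul {a b δ : ℝ} (hb : |b - a| ≤ δ * a)
    (hδa : 0 ≤ (1 - δ) * a) (g : ℝ) (d : ℕ) :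
    (1 - δ) ^ d * (a ^ d * |g|) ≤ |b ^ d * g| := by
  have hab : (1 - δ) * a ≤ |b| := by linarith [(abs_le.mp hb).1, le_abs_self b]
  rw [abs_mul, abs_pow, ← mul_assoc, ← mul_pow]
  gcongr

theorem abs_pow_mul_le_one_add_pow_mul {a b δ : ℝ} (ha : 0 ≤ a) (hb : |b - a| ≤ δ * a)
    (g : ℝ) (d : ℕ) :
    |b ^ d * g| ≤ (1 + δ) ^ d * (a ^ d * |g|) := by
  have hab : |b| ≤ (1 + δ) * a :=
    abs_le.mpr ⟨by linarith [(abs_le.mp hb).1], by linarith [(abs_le.mp hb).2]⟩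
  rw [abs_mul, abs_pow, ← mul_assoc, ← mul_pow]
  gcongr

section Weighted

variable {ι : Type*} {E : Set (ι → ℝ)} {σ : Measure (ι → ℝ)}

def HasBernsteinMarkovBound (E : Set (ι → ℝ)) (σ : Measure (ι → ℝ)) (C r : ℝ) : Prop :=
  ∀ p : MvPolynomial ι ℝ, sSup ((fun x => |eval x p|) '' E)
    ≤ C * r ^ p.totalDegree * √(∫ x, (eval x p) ^ 2 ∂σ)

theorem sSup_pow_mul_abs_eval_le [Countable ι] [IsFiniteMeasure σ] (hE : IsCompact E)
    (hσE : ∀ᵐ x ∂σ, x ∈ E) {w : (ι → ℝ) → ℝ} (hw : ContinuousOn w E) (hw0 : ∀ x ∈ E, 0 ≤ w x)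
    {H : MvPolynomial ι ℝ} {δ : ℝ} (hδ0 : 0 ≤ δ) (hδ1 : δ < 1)
    (hH : ∀ x ∈ E, |eval x H - w x| ≤ δ * w x)
    {C r : ℝ} (hC : 0 ≤ C) (hr : 1 ≤ r) (hBM : HasBernsteinMarkovBound E σ C r)
    {d : ℕ} {G : MvPolynomial ι ℝ} (hG : G.totalDegree ≤ d) :
    sSup ((fun x => w x ^ d * |eval x G|) '' E)
      ≤ C * ((1 + δ) / (1 - δ) * r ^ (H.totalDegree + 1)) ^ d
        * √(∫ x, (w x ^ d * |eval x G|) ^ 2 ∂σ) := by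
  set J := H ^ d * G
  set S := √(∫ x, (w x ^ d * |eval x G|) ^ 2 ∂σ)
  have hJ (x : ι → ℝ) : eval x J = eval x H ^ d * eval x G := by simp [J]
  have hδ' : 0 < 1 - δ := by linarith
  have hL2 : √(∫ x, (eval x J) ^ 2 ∂σ) ≤ (1 + δ) ^ d * S := by
    have hint : IntegrableOn (fun x => (w x ^ d * |eval x G|) ^ 2) E σ :=
      (((hw.pow d).mul (continuous_eval G).continuousOn.abs).pow 2).integrableOn_compact hE
    rw [IntegrableOn, Measure.restrict_eq_self_of_ae_mem hσE] at hint
    refine sqrt_integral_sq_le_of_ae_abs_le (pow_nonneg (by linarith) d) hint ?_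
    filter_upwards [hσE] with x hx
    rw [hJ, abs_of_nonneg (mul_nonneg (pow_nonneg (hw0 x hx) d) (abs_nonneg _))]
    exact abs_pow_mul_le_one_add_pow_mul (hw0 x hx) (hH x hx) _ d
  have hsupJ : sSup ((fun x => |eval x J|) '' E)
      ≤ C * r ^ ((H.totalDegree + 1) * d) * ((1 + δ) ^ d * S) := by
    exact (hBM J).trans (mul_le_mul (by gcongr; exact totalDegree_pow_mul_le H hG) hL2
      (Real.sqrt_nonneg _) (by positivity))
  have hJbdd : BddAbove ((fun x => |eval x J|) '' E) :=
    (hE.image (continuous_eval J).abs).bddAbove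
  refine Real.sSup_le ?_ (by positivity)
  rintro _ ⟨x, hx, rfl⟩
  have hpt := one_sub_pow_mul_le_abs_pow_mul (hH x hx)
    (mul_nonneg hδ'.le (hw0 x hx)) (eval x G) d
  rw [← hJ] at hpt
  calc w x ^ d * |eval x G| ≤ |eval x J| / (1 - δ) ^ d := by
        rw [le_div_iff₀ (by positivity), mul_comm]; exact hpt
    _ ≤ sSup ((fun x => |eval x J|) '' E) / (1 - δ) ^ d := by
        gcongr; exact le_csSup hJbdd ⟨x, hx, rfl⟩
    _ ≤ C * r ^ ((H.totalDegree + 1) * d) * ((1 + δ) ^ d * S) / (1 - δ) ^ d := by gcongr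
    _ = C * ((1 + δ) / (1 - δ) * r ^ (H.totalDegree + 1)) ^ d * S := by
        rw [mul_pow, div_pow, pow_mul]; field_simp

end Weighted

/-- If `E ⊂ ℝ^N` is compact, `w` is continuous on `E` with `inf_E w > 0`, and
`(E, σ)` satisfies the Bernstein–Markov inequality, then `(E, w, σ)` satisfies the
weighted Bernstein–Markov inequality. -/
theorem weighted_BM_from_BM_real {N : ℕ} (E : Set (Fin N → ℝ)) (hE : IsCompact E)
    (w : (Fin N → ℝ) → ℝ) (hw : ContinuousOn w E) (hwpos : 0 < sInf (w '' E))
    (σ : Measure (Fin N → ℝ)) [IsFiniteMeasure σ] (hσE : σ Eᶜ = 0)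
    (hBM : ∀ ε > (0:ℝ), ∃ C > (0:ℝ), ∀ p : MvPolynomial (Fin N) ℝ,
      sSup ((fun x => |MvPolynomial.eval x p|) '' E)
        ≤ C * (1 + ε) ^ p.totalDegree *
          Real.sqrt (∫ x, (MvPolynomial.eval x p) ^ 2 ∂σ)) :
    ∀ ε > (0:ℝ), ∃ C > (0:ℝ), ∀ d : ℕ, ∀ G : MvPolynomial (Fin N) ℝ,
      G.totalDegree ≤ d →
      sSup ((fun x => w x ^ d * |MvPolynomial.eval x G|) '' E)
        ≤ C * (1 + ε) ^ d *
          Real.sqrt (∫ x, (w x ^ d * |MvPolynomial.eval x G|) ^ 2 ∂σ) := by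
  intro ε hε
  have hσE' : ∀ᵐ x ∂σ, x ∈ E := mem_ae_iff.mpr hσE
  have hmw : ∀ x ∈ E, sInf (w '' E) ≤ w x := fun x hx =>
    csInf_le (hE.image_of_continuousOn hw).bddBelow (Set.mem_image_of_mem w hx)
  set η := √(1 + ε)
  have hη : 1 < η := Real.lt_sqrt zero_le_one |>.mpr (by linarith)
  obtain ⟨δ, hδ0, hδ1, hδη⟩ := exists_one_add_div_one_sub_le hη
  obtain ⟨H, hH⟩ := exists_abs_eval_sub_le_mul hE hw hwpos hmw hδ0
  obtain ⟨ε', hε', hε'η⟩ := exists_one_add_pow_lt hη (H.totalDegree + 1)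
  obtain ⟨C, hC, hBMC⟩ := hBM ε' hε'
  have hfactor : (1 + δ) / (1 - δ) * (1 + ε') ^ (H.totalDegree + 1) ≤ 1 + ε :=
    calc _ ≤ η * η := mul_le_mul hδη hε'η.le (by positivity) (by positivity)
      _ = 1 + ε := Real.mul_self_sqrt (by linarith)
  refine ⟨C, hC, fun d G hG => (sSup_pow_mul_abs_eval_le hE hσE' hw
    (fun x hx => hwpos.le.trans (hmw x hx)) hδ0.le hδ1 hH hC.le (by linarith) hBMC hG).trans ?_⟩
  gcongr
end

section
/- Let H : ℝ^N → ℝ be continuous, homogeneous of degree γ > 0, and strictly positive off the origin. Then for every polynomial p of degree ≤ d in N variables and every A with 0 < A < (1/2)·min_{|y|=1} H(y), there exist R > 0 and the bound: if sup_{|y| ≤ R} e^{−dH(y)/2}|p(y)| ≤ M, then e^{−dH(y)/2}|p(y)| ≤ M' e^{−Ad|y|^γ} for |y| ≥ R and some constant M' depending only on M (for R sufficiently large depending on A, γ, N but not on d or p). -/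
/-!
Restricted to the ray through `y`, `p` becomes a polynomial `q(t) = p(t • y/‖y‖)` of degree
`≤ d` with `|q| ≤ M e^{db/2}` on `[0, 1]`, where `b` bounds `H` on the unit ball. Lagrange
interpolation at the nodes `i/d` then gives `|q(r)| ≤ M e^{db/2} (2e r)^d` for `r ≥ 1`, and
homogeneity gives `H(y) ≥ c ‖y‖^γ` with `c = inf_{‖u‖=1} H(u) > 2A`. Hence the weighted
value at `y` is at most `M (C r e^{-c r^γ/2})^d`, and `C r ≤ e^{(c/2 - A) r^γ}` once `r` is
large.
-/

open Finset Polynomial Filter Real Topology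
open scoped Nat

namespace Polynomial

lemma prod_erase_range_abs_natCast_sub {d i : ℕ} (hi : i ≤ d) :
    ∏ j ∈ (range (d + 1)).erase i, |(i : ℝ) - j| = i ! * (d - i)! := by
  have hsplit : (range (d + 1)).erase i = range i ∪ Ico (i + 1) (d + 1) := by
    ext j; simp only [mem_erase, mem_range, mem_union, mem_Ico]; omega
  have hdisj : Disjoint (range i) (Ico (i + 1) (d + 1)) := by
    simp only [disjoint_left, mem_range, mem_Ico]; omega
  have hlow : ∏ j ∈ range i, |(i : ℝ) - j| = i ! := by
    rw [← Nat.descFactorial_self, Nat.descFactorial_eq_prod_range, Nat.cast_prod]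
    refine prod_congr rfl fun j hj => ?_
    have hji : j ≤ i := (mem_range.1 hj).le
    rw [Nat.cast_sub hji, abs_of_nonneg (sub_nonneg.2 (Nat.cast_le.2 hji))]
  have hhigh : ∏ j ∈ Ico (i + 1) (d + 1), |(i : ℝ) - j| = (d - i)! := by
    rw [prod_Ico_eq_prod_range, ← prod_range_add_one_eq_factorial, Nat.cast_prod,
      show d + 1 - (i + 1) = d - i by omega]
    refine prod_congr rfl fun j _ => ?_
    rw [abs_sub_comm]; push_cast; rw [abs_of_nonneg (by linarith)]; ring
  rw [hsplit, prod_union hdisj, hlow, hhigh]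

lemma abs_eval_basis_natCast_le {d i : ℕ} (hi : i ≤ d) {x : ℝ} (hx : d ≤ x) :
    |(Lagrange.basis (range (d + 1)) (Nat.cast : ℕ → ℝ) i).eval x|
      ≤ x ^ d * d.choose i / d ! := by
  have hcard : #((range (d + 1)).erase i) = d := by
    rw [card_erase_of_mem (mem_range.2 (by omega)), card_range, Nat.add_sub_cancel]
  have hnum : ∏ j ∈ (range (d + 1)).erase i, |x - j| ≤ x ^ d := by
    calc ∏ j ∈ (range (d + 1)).erase i, |x - j| ≤ ∏ _j ∈ (range (d + 1)).erase i, x := ?_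
      _ = x ^ d := by rw [prod_const, hcard]
    refine prod_le_prod (fun _ _ => abs_nonneg _) fun j hj => ?_
    have : (j : ℝ) ≤ d :=
      by exact_mod_cast Nat.lt_succ_iff.1 (mem_range.1 (mem_of_mem_erase hj))
    rw [abs_of_nonneg (by linarith)]
    linarith [j.cast_nonneg (α := ℝ)]
  simp only [Lagrange.basis, Lagrange.basisDivisor, eval_prod, eval_mul, eval_C, eval_sub, eval_X,
    abs_prod, abs_mul, abs_inv, prod_mul_distrib, prod_inv_distrib,
    prod_erase_range_abs_natCast_sub hi]
  rw [Nat.cast_choose ℝ hi, mul_div_assoc, div_div_cancel_left' (by positivity), mul_comm]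
  gcongr

lemma abs_eval_le_of_abs_eval_natCast_le {Q : ℝ[X]} {d : ℕ} (hQ : Q.natDegree ≤ d) {K : ℝ}
    (hK : ∀ i ≤ d, |Q.eval (i : ℝ)| ≤ K) {x : ℝ} (hx : d ≤ x) :
    |Q.eval x| ≤ K * (2 * x) ^ d / d ! := by
  have hinj : Set.InjOn (Nat.cast : ℕ → ℝ) (range (d + 1)) := Nat.cast_injective.injOn
  have hdeg : Q.degree < #(range (d + 1)) := by
    rw [card_range]
    exact (degree_le_of_natDegree_le hQ).trans_lt (by exact_mod_cast d.lt_succ_self)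
  have hK0 : 0 ≤ K := (abs_nonneg _).trans (hK 0 d.zero_le)
  rw [Lagrange.eq_interpolate hinj hdeg, Lagrange.interpolate_apply, eval_finsetSum]
  calc |∑ i ∈ range (d + 1),
          (C (Q.eval (i : ℝ)) * Lagrange.basis (range (d + 1)) Nat.cast i).eval x|
      ≤ ∑ i ∈ range (d + 1), K * (x ^ d * d.choose i / d !) := by
        refine (abs_sum_le_sum_abs _ _).trans (sum_le_sum fun i hi => ?_)
        have hi : i ≤ d := Nat.lt_succ_iff.1 (mem_range.1 hi)
        rw [eval_mul, eval_C, abs_mul]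
        exact mul_le_mul (hK i hi) (abs_eval_basis_natCast_le hi hx) (abs_nonneg _) hK0
    _ = K * (2 * x) ^ d / d ! := by
        rw [← mul_sum, ← sum_div, ← mul_sum, ← Nat.cast_sum, Nat.sum_range_choose]
        push_cast; ring

lemma abs_eval_le_of_abs_eval_unitInterval_le {q : ℝ[X]} {d : ℕ} (hq : q.natDegree ≤ d)
    {K : ℝ} (hK : ∀ t ∈ Set.Icc (0 : ℝ) 1, |q.eval t| ≤ K) {x : ℝ} (hx : 1 ≤ x) :
    |q.eval x| ≤ K * (2 * exp 1 * x) ^ d := by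
  rcases d.eq_zero_or_pos with rfl | hd
  · rw [eq_C_of_natDegree_le_zero hq] at hK ⊢
    simpa using hK 0 (by simp)
  have hd' : (0 : ℝ) < d := by exact_mod_cast hd
  set Q := q.comp (C (d : ℝ)⁻¹ * X)
  have hQ : ∀ s, Q.eval s = q.eval (s / d) := fun s => by simp [Q, div_eq_inv_mul]
  have hQdeg : Q.natDegree ≤ d :=
    natDegree_comp_le.trans <|
      (Nat.mul_le_mul hq ((natDegree_C_mul_le _ _).trans natDegree_X_le)).trans_eq d.mul_one
  have hQK : ∀ i ≤ d, |Q.eval (i : ℝ)| ≤ K := fun i hi => by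
    rw [hQ]; exact hK _ ⟨by positivity, (div_le_one hd').2 (by exact_mod_cast hi)⟩
  have hK0 : 0 ≤ K := (abs_nonneg _).trans (hQK 0 d.zero_le)
  calc |q.eval x| = |Q.eval (d * x)| := by rw [hQ, mul_div_cancel_left₀ _ hd'.ne']
    _ ≤ K * (2 * (d * x)) ^ d / d ! :=
        abs_eval_le_of_abs_eval_natCast_le hQdeg hQK (le_mul_of_one_le_right hd'.le hx)
    _ = K * (2 * x) ^ d * ((d : ℝ) ^ d / d !) := by ring
    _ ≤ K * (2 * x) ^ d * exp 1 ^ d := by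
        rw [← exp_nat_mul, mul_one]
        gcongr
        exact pow_div_factorial_le_exp _ hd'.le _
    _ = K * (2 * exp 1 * x) ^ d := by ring

end Polynomial

namespace MvPolynomial

variable {σ : Type*}

lemma eval_aeval_C_mul_X {R : Type*} [CommRing R] (u : σ → R) (p : MvPolynomial σ R) (t : R) :
    (aeval (fun i => Polynomial.C (u i) * Polynomial.X) p).eval t = eval (t • u) p := by
  induction p using MvPolynomial.induction_on with
  | C a => simp
  | add p q hp hq => simp [hp, hq]
  | mul_X p i hp => simp [hp]; ring

lemma abs_eval_smul_le_of_unitInterval {p : MvPolynomial σ ℝ} {d : ℕ}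
    (hp : p.totalDegree ≤ d) (u : σ → ℝ) {K : ℝ}
    (hK : ∀ t ∈ Set.Icc (0 : ℝ) 1, |eval (t • u) p| ≤ K) {x : ℝ} (hx : 1 ≤ x) :
    |eval (x • u) p| ≤ K * (2 * exp 1 * x) ^ d := by
  have hdeg : (aeval (fun i => Polynomial.C (u i) * Polynomial.X) p).natDegree ≤ d :=
    (aeval_natDegree_le p hp _ fun _ => (natDegree_C_mul_le _ _).trans natDegree_X_le).trans_eq
      d.mul_one
  simpa only [eval_aeval_C_mul_X] using
    abs_eval_le_of_abs_eval_unitInterval_le hdeg (by simpa only [eval_aeval_C_mul_X]) hx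

end MvPolynomial

lemma sInf_sphere_mul_norm_rpow_le {E : Type*} [NormedAddCommGroup E] [NormedSpace ℝ E]
    {H : E → ℝ} {γ : ℝ} (hhom : ∀ c : ℝ, 0 ≤ c → ∀ x, H (c • x) = c ^ γ * H x)
    (hbdd : BddBelow (H '' Metric.sphere 0 1)) {y : E} (hy : y ≠ 0) :
    sInf (H '' Metric.sphere 0 1) * ‖y‖ ^ γ ≤ H y := by
  have hu : ‖y‖⁻¹ • y ∈ Metric.sphere (0 : E) 1 := by
    simp [norm_smul, norm_ne_zero_iff.2 hy]
  have hHy : H y = ‖y‖ ^ γ * H (‖y‖⁻¹ • y) := by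
    rw [← hhom _ (norm_nonneg y), smul_inv_smul₀ (norm_ne_zero_iff.2 hy)]
  rw [hHy, mul_comm]
  gcongr
  exact csInf_le hbdd (Set.mem_image_of_mem H hu)

lemma le_mul_exp_of_exp_neg_mul_le {a b x M : ℝ} (h : exp (-a) * x ≤ M) (hM : 0 ≤ M)
    (hab : a ≤ b) : x ≤ M * exp b :=
  calc x = exp a * (exp (-a) * x) := by
        rw [← mul_assoc, ← exp_add, add_neg_cancel, exp_zero, one_mul]
    _ ≤ exp a * M := by gcongr
    _ ≤ M * exp b := by rw [mul_comm]; gcongr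

lemma abs_eval_smul_le_of_weighted_le {ι : Type*} [Fintype ι] {H : EuclideanSpace ℝ ι → ℝ}
    {b M : ℝ} {d : ℕ} {p : MvPolynomial ι ℝ} (hb : ∀ z, ‖z‖ ≤ 1 → H z ≤ b) (hM0 : 0 ≤ M)
    (hM : ∀ z : EuclideanSpace ℝ ι, ‖z‖ ≤ 1 →
      exp (-(d : ℝ) * H z / 2) * |MvPolynomial.eval (fun i => z i) p| ≤ M)
    {u : EuclideanSpace ℝ ι} (hu : ‖u‖ = 1) :
    ∀ t ∈ Set.Icc (0 : ℝ) 1, |MvPolynomial.eval (t • fun i => u i) p| ≤ M * exp (d * b / 2) := by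
  intro t ht
  have hz : ‖t • u‖ ≤ 1 := by simp [norm_smul, hu, abs_of_nonneg ht.1, ht.2]
  have hweighted := hM _ hz
  rw [neg_mul, neg_div] at hweighted
  have htu : (t • fun i => u i) = fun i => (t • u) i := by ext; simp
  rw [htu]
  exact le_mul_exp_of_exp_neg_mul_le hweighted hM0 (by gcongr; exact hb _ hz)

lemma tendsto_mul_exp_neg_mul_rpow_atTop {γ ε : ℝ} (hγ : 0 < γ) (hε : 0 < ε) :
    Tendsto (fun r => r * exp (-ε * r ^ γ)) atTop (𝓝 0) := by
  refine ((tendsto_rpow_mul_exp_neg_mul_atTop_nhds_zero γ⁻¹ ε hε).comp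
    (tendsto_rpow_atTop hγ)).congr' ?_
  filter_upwards [eventually_ge_atTop 0] with r hr
  simp [rpow_rpow_inv hr hγ.ne']

lemma eventually_mul_mul_exp_neg_rpow_le (C : ℝ) {γ A c : ℝ} (hγ : 0 < γ) (hAc : A < c) :
    ∀ᶠ r in atTop, C * r * exp (-c * r ^ γ) ≤ exp (-A * r ^ γ) := by
  filter_upwards [((tendsto_mul_exp_neg_mul_rpow_atTop hγ (sub_pos.2 hAc)).const_mul C).eventually
    (ge_mem_nhds (show C * 0 < 1 by simp))] with r hr
  calc C * r * exp (-c * r ^ γ) = C * (r * exp (-(c - A) * r ^ γ)) * exp (-A * r ^ γ) := by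
        rw [mul_assoc C, mul_assoc C, mul_assoc r, ← exp_add]; ring_nf
    _ ≤ exp (-A * r ^ γ) := mul_le_of_le_one_left (exp_pos _).le hr

theorem weighted_poly_decay_general {N : ℕ} (γ : ℝ) (hγ : 0 < γ)
    (H : EuclideanSpace ℝ (Fin N) → ℝ) (hHc : Continuous H)
    (hhom : ∀ c : ℝ, 0 ≤ c → ∀ x, H (c • x) = c ^ γ * H x)
    (hpos : ∀ x, x ≠ 0 → 0 < H x)
    (A : ℝ)
    (hA2 : A < (1 / 2) * sInf (H '' Metric.sphere (0 : EuclideanSpace ℝ (Fin N)) 1)) :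
    ∃ R > (0:ℝ), ∀ M : ℝ, ∃ M' : ℝ, ∀ d : ℕ, 1 ≤ d →
      ∀ p : MvPolynomial (Fin N) ℝ, p.totalDegree ≤ d →
      (∀ y : EuclideanSpace ℝ (Fin N), ‖y‖ ≤ R →
        Real.exp (-(d : ℝ) * H y / 2) * |MvPolynomial.eval (fun i => y i) p| ≤ M) →
      ∀ y : EuclideanSpace ℝ (Fin N), R ≤ ‖y‖ →
        Real.exp (-(d : ℝ) * H y / 2) * |MvPolynomial.eval (fun i => y i) p|
          ≤ M' * Real.exp (-A * (d : ℝ) * ‖y‖ ^ γ) := by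
  set c := sInf (H '' Metric.sphere (0 : EuclideanSpace ℝ (Fin N)) 1)
  have hbdd : BddBelow (H '' Metric.sphere 0 1) :=
    ⟨0, Set.forall_mem_image.2 fun x hx =>
      (hpos x (ne_zero_of_mem_sphere one_ne_zero ⟨x, hx⟩)).le⟩
  obtain ⟨b, hb⟩ := (isCompact_closedBall (0 : EuclideanSpace ℝ (Fin N)) 1).bddAbove_image
    hHc.continuousOn
  obtain ⟨R, hR⟩ := eventually_atTop.1 ((eventually_mul_mul_exp_neg_rpow_le
    (2 * exp 1 * exp (b / 2)) hγ (show A < c / 2 by linarith)).and (eventually_ge_atTop 1))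
  have hR1 : 1 ≤ R := (hR R le_rfl).2
  refine ⟨R, by linarith, fun M => ⟨M, fun d _ p hpd hM y hy => ?_⟩⟩
  have hM0 : 0 ≤ M := (mul_nonneg (exp_pos _).le (abs_nonneg _)).trans (hM 0 (by simp; linarith))
  have hy0 : ‖y‖ ≠ 0 := by linarith
  have hline := abs_eval_smul_le_of_weighted_le (fun z hz => hb ⟨z, by simpa using hz, rfl⟩)
    hM0 (fun z hz => hM z (hz.trans hR1)) (u := ‖y‖⁻¹ • y) (by simp [norm_smul, hy0])
  have hgrowth := MvPolynomial.abs_eval_smul_le_of_unitInterval hpd _ hline (hR1.trans hy)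
  have hyu : (‖y‖ • fun i => (‖y‖⁻¹ • y) i) = fun i => y i := by ext i; simp [hy0]
  rw [hyu] at hgrowth
  have hH : c * ‖y‖ ^ γ ≤ H y :=
    sInf_sphere_mul_norm_rpow_le hhom hbdd (norm_ne_zero_iff.1 hy0)
  calc exp (-d * H y / 2) * |MvPolynomial.eval (fun i => y i) p|
      ≤ exp (-d * (c * ‖y‖ ^ γ) / 2) * (M * exp (d * b / 2) * (2 * exp 1 * ‖y‖) ^ d) :=
        mul_le_mul (exp_le_exp.2 (by nlinarith [d.cast_nonneg (α := ℝ)])) hgrowth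
          (abs_nonneg _) (exp_pos _).le
    _ = M * (2 * exp 1 * exp (b / 2) * ‖y‖ * exp (-(c / 2) * ‖y‖ ^ γ)) ^ d := by
        simp only [mul_pow, ← exp_nat_mul]
        ring_nf
    _ ≤ M * exp (-A * ‖y‖ ^ γ) ^ d := by
        gcongr
        exact (hR _ hy).1
    _ = M * exp (-A * d * ‖y‖ ^ γ) := by
        rw [← exp_nat_mul]; ring_nf

/-- Decay estimate for weighted polynomials: if `H` is continuous, homogeneous of
degree `γ > 0` and positive off the origin, and `0 < A < (1/2)·min_{|y|=1} H(y)`,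
then there is `R > 0` such that for any bound `M` on `e^{−dH/2}|p|` over the ball of
radius `R` there is a constant `M'` (independent of `d` and `p`) with
`e^{−dH(y)/2}|p(y)| ≤ M' e^{−Ad|y|^γ}` for all `|y| ≥ R`. -/
theorem weighted_poly_decay {N : ℕ} (γ : ℝ) (hγ : 0 < γ)
    (H : EuclideanSpace ℝ (Fin N) → ℝ) (hHc : Continuous H)
    (hhom : ∀ c : ℝ, 0 ≤ c → ∀ x, H (c • x) = c ^ γ * H x)
    (hpos : ∀ x, x ≠ 0 → 0 < H x)
    (A : ℝ) (hA : 0 < A)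
    (hA2 : A < (1 / 2) * sInf (H '' Metric.sphere (0 : EuclideanSpace ℝ (Fin N)) 1)) :
    ∃ R > (0:ℝ), ∀ M : ℝ, ∃ M' : ℝ, ∀ d : ℕ, 1 ≤ d →
      ∀ p : MvPolynomial (Fin N) ℝ, p.totalDegree ≤ d →
      (∀ y : EuclideanSpace ℝ (Fin N), ‖y‖ ≤ R →
        Real.exp (-(d : ℝ) * H y / 2) * |MvPolynomial.eval (fun i => y i) p| ≤ M) →
      ∀ y : EuclideanSpace ℝ (Fin N), R ≤ ‖y‖ →
        Real.exp (-(d : ℝ) * H y / 2) * |MvPolynomial.eval (fun i => y i) p|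
          ≤ M' * Real.exp (-A * (d : ℝ) * ‖y‖ ^ γ) :=
  weighted_poly_decay_general γ hγ H hHc hhom hpos A hA2
end
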